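/- arXiv:2007.02772 — 4 statements merged into one kernel-verified Lean document; each statement's English description precedes it below -/
import Mathlib

section
/- Let U and Z be Banach spaces, let F : U → ℝ be locally Lipschitz at u₀ ∈ U, and let G : U → Z be Fréchet differentiable with G(u₀) = 0. Let φ ∈ U satisfy G'(u₀)φ = 0, and suppose there exist ε₀ > 0, K₁ > 0 and a family {ψ₀(t) : 0 < |t| < ε₀} ⊂ U with ‖ψ₀(t)‖ ≤ K₁ and G(u₀ + tφ + t²ψ₀(t)) = 0 for all 0 < |t| < ε₀. If u₀ is a local minimum of F subject to the constraint G(u) = 0 (i.e., there is δ > 0 with F(u) ≥ F(u₀) for all u ∈ B_δ(u₀) with G(u) = 0), then H_{u₀}(φ) ≥ 0. -/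
/-!
Along `tₙ → 0⁺` put `uₙ = u₀ + tₙ² ψ₀(tₙ)`. Then `uₙ + tₙ φ` satisfies the constraint, so
`F (uₙ + tₙ φ) ≥ F u₀`, while `F uₙ ≤ F u₀ + K K₁ tₙ²` by the Lipschitz bound. Hence the difference
quotients at `(uₙ, tₙ)` are at least `-K K₁ tₙ → 0`, and their limsup, which is one of the numbers
whose supremum defines `H_{u₀}(φ)`, is nonnegative. The Lipschitz bound also bounds all these
limsups by `K ‖φ‖`, so that the supremum is not a junk value.
-/

open Filter Topology Metric

/-- The generalized directional derivative `H_u(φ)` of `F` at `u` in direction `φ`: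
the supremum, over all sequences `uₙ → u` in `U` and `tₙ → 0⁺` in `ℝ`, of
`limsup_{n → ∞} (F (uₙ + tₙ φ) - F uₙ) / tₙ`. -/
noncomputable def genDirDeriv {U : Type*} [NormedAddCommGroup U] [NormedSpace ℝ U]
    (F : U → ℝ) (u : U) (φ : U) : ℝ :=
  sSup { L : ℝ | ∃ (un : ℕ → U) (tn : ℕ → ℝ),
    (∀ n, 0 < tn n) ∧
    Tendsto un atTop (𝓝 u) ∧ Tendsto tn atTop (𝓝 0) ∧
    L = limsup (fun n => (F (un n + tn n • φ) - F (un n)) / tn n) atTop }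

/-- `F` is locally Lipschitz at `u`: there are `r > 0` and `K > 0` with
`|F v - F w| ≤ K ‖v - w‖` for all `v, w` in the ball `B_r(u)`. -/
def LocallyLipschitzAtPt {U : Type*} [NormedAddCommGroup U] (F : U → ℝ) (u : U) : Prop :=
  ∃ r > (0 : ℝ), ∃ K > (0 : ℝ),
    ∀ v ∈ ball u r, ∀ w ∈ ball u r, |F v - F w| ≤ K * ‖v - w‖

section

variable {U : Type*} [NormedAddCommGroup U] [NormedSpace ℝ U] {F : U → ℝ} {u φ : U}

theorem abs_diffQuot_eventually_le_of_lipschitzOn_ball {r K : ℝ} (hr : 0 < r)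
    (hLip : ∀ v ∈ ball u r, ∀ w ∈ ball u r, |F v - F w| ≤ K * ‖v - w‖)
    {un : ℕ → U} {tn : ℕ → ℝ} (htn_pos : ∀ n, 0 < tn n)
    (hun : Tendsto un atTop (𝓝 u)) (htn : Tendsto tn atTop (𝓝 0)) :
    ∀ᶠ n in atTop, |(F (un n + tn n • φ) - F (un n)) / tn n| ≤ K * ‖φ‖ := by
  have hshift : Tendsto (fun n => un n + tn n • φ) atTop (𝓝 u) := by
    simpa using hun.add (htn.smul_const φ)
  filter_upwards [hshift (ball_mem_nhds u hr), hun (ball_mem_nhds u hr)] with n hshift_mem hun_mem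
  have hLipn := hLip _ hshift_mem _ hun_mem
  rw [add_sub_cancel_left, norm_smul, Real.norm_of_nonneg (htn_pos n).le] at hLipn
  rw [abs_div, abs_of_pos (htn_pos n), div_le_iff₀ (htn_pos n)]
  linarith

namespace LocallyLipschitzAtPt

theorem limsup_le_genDirDeriv (hF : LocallyLipschitzAtPt F u)
    {un : ℕ → U} {tn : ℕ → ℝ} (htn_pos : ∀ n, 0 < tn n)
    (hun : Tendsto un atTop (𝓝 u)) (htn : Tendsto tn atTop (𝓝 0)) :
    limsup (fun n => (F (un n + tn n • φ) - F (un n)) / tn n) atTop ≤ genDirDeriv F u φ := by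
  obtain ⟨r, hr, K, -, hLip⟩ := hF
  refine le_csSup ⟨K * ‖φ‖, ?_⟩ ⟨un, tn, htn_pos, hun, htn, rfl⟩
  rintro _ ⟨vn, sn, hsn_pos, hvn, hsn, rfl⟩
  have hbound := abs_diffQuot_eventually_le_of_lipschitzOn_ball hr hLip hsn_pos hvn hsn (φ := φ)
  exact limsup_le_of_le
    (isBoundedUnder_of_eventually_ge (hbound.mono fun _ => neg_le_of_abs_le)).isCoboundedUnder_le
    (hbound.mono fun _ => le_of_abs_le)

theorem genDirDeriv_nonneg_of_tendsto (hF : LocallyLipschitzAtPt F u) {S : Set U}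
    (hmin : ∀ᶠ v in 𝓝 u, v ∈ S → F u ≤ F v)
    {t : ℕ → ℝ} {w : ℕ → U} (ht_pos : ∀ n, 0 < t n) (ht : Tendsto t atTop (𝓝 0))
    (hw : Tendsto (fun n => ‖w n‖ / t n) atTop (𝓝 0))
    (hS : ∀ᶠ n in atTop, u + t n • φ + w n ∈ S) :
    0 ≤ genDirDeriv F u φ := by
  have ⟨r, hr, K, _, hLip⟩ := hF
  have hw_zero : Tendsto w atTop (𝓝 0) := by
    refine tendsto_zero_iff_norm_tendsto_zero.2 ?_
    simpa [mul_div_cancel₀ _ (ht_pos _).ne'] using ht.mul hw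
  have hun : Tendsto (fun n => u + w n) atTop (𝓝 u) := by simpa using hw_zero.const_add u
  have hcurve : Tendsto (fun n => u + t n • φ + w n) atTop (𝓝 u) := by
    simpa using ((ht.smul_const φ).const_add u).add hw_zero
  set q := fun n => (F (u + w n + t n • φ) - F (u + w n)) / t n
  have hq_lower : ∀ᶠ n in atTop, -K * (‖w n‖ / t n) ≤ q n := by
    filter_upwards [hcurve.eventually hmin, hS, hun (ball_mem_nhds u hr)] with n hmin_n hS_n hun_n
    have hF_curve : F u ≤ F (u + w n + t n • φ) := by rw [add_right_comm]; exact hmin_n hS_n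
    have hF_un : F (u + w n) - F u ≤ K * ‖w n‖ := by
      simpa using (le_abs_self _).trans (hLip _ hun_n _ (mem_ball_self hr))
    rw [neg_mul, ← mul_div_assoc, ← neg_div]
    exact div_le_div_of_nonneg_right (by linarith) (ht_pos n).le
  have hq_upper : IsBoundedUnder (· ≤ ·) atTop q :=
    isBoundedUnder_of_eventually_le ((abs_diffQuot_eventually_le_of_lipschitzOn_ball hr hLip
      ht_pos hun ht).mono fun _ => le_of_abs_le)
  have hlower_tendsto : Tendsto (fun n => -K * (‖w n‖ / t n)) atTop (𝓝 0) := by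
    simpa using hw.const_mul (-K)
  calc (0 : ℝ) = limsup (fun n => -K * (‖w n‖ / t n)) atTop := hlower_tendsto.limsup_eq.symm
    _ ≤ limsup q atTop :=
      limsup_le_limsup hq_lower hlower_tendsto.isBoundedUnder_ge.isCoboundedUnder_le hq_upper
    _ ≤ genDirDeriv F u φ := hF.limsup_le_genDirDeriv ht_pos hun ht

end LocallyLipschitzAtPt

end

theorem genDirDeriv_nonneg_of_localMin_eqConstraint_general
    {U : Type*} [NormedAddCommGroup U] [NormedSpace ℝ U]
    {Z : Type*} [NormedAddCommGroup Z]
    (F : U → ℝ) (u₀ : U) (hF : LocallyLipschitzAtPt F u₀)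
    (G : U → Z)
    (φ : U)
    (ε₀ K₁ : ℝ) (hε₀ : 0 < ε₀) (ψ₀ : ℝ → U)
    (hψ : ∀ t : ℝ, 0 < |t| → |t| < ε₀ →
      ‖ψ₀ t‖ ≤ K₁ ∧ G (u₀ + t • φ + t ^ 2 • ψ₀ t) = 0)
    (hmin : ∃ δ > (0 : ℝ), ∀ u ∈ ball u₀ δ, G u = 0 → F u₀ ≤ F u) :
    0 ≤ genDirDeriv F u₀ φ := by
  obtain ⟨δ, hδ, hmin⟩ := hmin
  set t : ℕ → ℝ := fun n => ε₀ / (n + 2)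
  have ht_pos (n : ℕ) : 0 < t n := by positivity
  have ht_lt (n : ℕ) : t n < ε₀ := div_lt_self hε₀ (by linarith [n.cast_nonneg (α := ℝ)])
  have ht : Tendsto t atTop (𝓝 0) :=
    tendsto_const_nhds.div_atTop (tendsto_natCast_atTop_atTop.atTop_add tendsto_const_nhds)
  have hψn (n : ℕ) : ‖ψ₀ (t n)‖ ≤ K₁ ∧ G (u₀ + t n • φ + t n ^ 2 • ψ₀ (t n)) = 0 :=
    hψ (t n) (abs_pos.2 (ht_pos n).ne') ((abs_of_pos (ht_pos n)).trans_lt (ht_lt n))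
  have hw : Tendsto (fun n => ‖t n ^ 2 • ψ₀ (t n)‖ / t n) atTop (𝓝 0) := by
    refine squeeze_zero (fun n => by positivity) (fun n => ?_) (by simpa using ht.mul_const K₁)
    rw [norm_smul, Real.norm_of_nonneg (by positivity), sq, mul_assoc, mul_div_cancel_left₀ _
      (ht_pos n).ne']
    exact mul_le_mul_of_nonneg_left (hψn n).1 (ht_pos n).le
  exact hF.genDirDeriv_nonneg_of_tendsto (S := {v | G v = 0})
    (eventually_of_mem (ball_mem_nhds u₀ hδ) hmin) ht_pos ht hw
    (Eventually.of_forall fun n => (hψn n).2)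

/-- if `u₀` is a local minimum of `F` subject to `G u = 0`, `G'(u₀) φ = 0`,
and there is a uniformly bounded family of corrections `ψ₀(t)` keeping the constraint
satisfied along `u₀ + t φ + t² ψ₀(t)`, then `H_{u₀}(φ) ≥ 0`. -/
theorem genDirDeriv_nonneg_of_localMin_eqConstraint
    {U : Type*} [NormedAddCommGroup U] [NormedSpace ℝ U] [CompleteSpace U]
    {Z : Type*} [NormedAddCommGroup Z] [NormedSpace ℝ Z] [CompleteSpace Z]
    (F : U → ℝ) (u₀ : U) (hF : LocallyLipschitzAtPt F u₀)
    (G : U → Z) (G' : U →L[ℝ] Z) (hG : HasFDerivAt G G' u₀) (hG0 : G u₀ = 0)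
    (φ : U) (hφ : G' φ = 0)
    (ε₀ K₁ : ℝ) (hε₀ : 0 < ε₀) (hK₁ : 0 < K₁) (ψ₀ : ℝ → U)
    (hψ : ∀ t : ℝ, 0 < |t| → |t| < ε₀ →
      ‖ψ₀ t‖ ≤ K₁ ∧ G (u₀ + t • φ + t ^ 2 • ψ₀ t) = 0)
    (hmin : ∃ δ > (0 : ℝ), ∀ u ∈ ball u₀ δ, G u = 0 → F u₀ ≤ F u) :
    0 ≤ genDirDeriv F u₀ φ :=
  genDirDeriv_nonneg_of_localMin_eqConstraint_general F u₀ hF G φ ε₀ K₁ hε₀ ψ₀ hψ hmin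
end

section
/- Let U be a Banach space, let F : U → ℝ be locally Lipschitz at u₀ ∈ U, and let V be a closed linear subspace of U such that H_{u₀}(φ) ≥ 0 for all φ ∈ V. Then there exists u* ∈ ∂⁰F(u₀) (i.e., a continuous linear functional u* on U with ⟨φ, u*⟩ ≤ H_{u₀}(φ) for all φ ∈ U) such that ⟨φ, u*⟩ = 0 for all φ ∈ V. -/
open Filter Topology Metric

/-!
A Hahn–Banach argument. The generalized directional derivative `φ ↦ H_{u₀}(φ)` is positively
homogeneous and subadditive, and the Lipschitz bound gives `H_{u₀}(φ) ≤ K ‖φ‖`. The zero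
functional on `V` lies below `H_{u₀}` by hypothesis, so it extends to a linear functional `g ≤ H_{u₀}`
on `U`; then `-K ‖φ‖ ≤ -H_{u₀}(-φ) ≤ g φ ≤ H_{u₀}(φ) ≤ K ‖φ‖`, so `g` is continuous.
-/

open scoped NNReal Pointwise

theorem LocallyLipschitzAtPt.exists_lipschitzOnWith {U : Type*} [NormedAddCommGroup U]
    {F : U → ℝ} {u : U} (hF : LocallyLipschitzAtPt F u) :
    ∃ K : ℝ≥0, ∃ s ∈ 𝓝 u, LipschitzOnWith K F s := by
  obtain ⟨r, hr, K, hK, hLip⟩ := hF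
  exact ⟨⟨K, hK.le⟩, ball u r, ball_mem_nhds u hr,
    LipschitzOnWith.of_dist_le_mul fun v hv w hw => by
      rw [dist_eq_norm, dist_eq_norm, Real.norm_eq_abs]
      exact hLip v hv w hw⟩

theorem exists_continuousLinearMap_le_of_sublinear {E : Type*} [NormedAddCommGroup E]
    [NormedSpace ℝ E] (N : E → ℝ) (C : ℝ) (N_hom : ∀ c : ℝ, 0 < c → ∀ x, N (c • x) = c * N x)
    (N_add : ∀ x y, N (x + y) ≤ N x + N y) (N_le : ∀ x, N x ≤ C * ‖x‖)
    (V : Submodule ℝ E) (hV : ∀ x ∈ V, 0 ≤ N x) :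
    ∃ g : E →L[ℝ] ℝ, (∀ x, g x ≤ N x) ∧ ∀ x ∈ V, g x = 0 := by
  obtain ⟨g, hgV, hgN⟩ :=
    exists_extension_of_le_sublinear ⟨V, 0⟩ N N_hom N_add fun x => hV x x.2
  have hg_bound (x : E) : ‖g x‖ ≤ C * ‖x‖ := by
    have h_neg : -g x ≤ C * ‖x‖ := by
      simpa only [map_neg, norm_neg] using (hgN (-x)).trans (N_le (-x))
    exact abs_le.2 ⟨by linarith, (hgN x).trans (N_le x)⟩
  exact ⟨g.mkContinuous C hg_bound, hgN, fun x hx => hgV ⟨x, hx⟩⟩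

section GenDirDeriv

variable {U : Type*} [NormedAddCommGroup U] [NormedSpace ℝ U] {F : U → ℝ} {u φ : U}
  {s : Set U} {K : ℝ≥0} {un : ℕ → U} {tn : ℕ → ℝ}

noncomputable def diffQuot (F : U → ℝ) (φ x : U) (t : ℝ) : ℝ := (F (x + t • φ) - F x) / t

def genDirDerivSet (F : U → ℝ) (u φ : U) : Set ℝ :=
  { L : ℝ | ∃ (un : ℕ → U) (tn : ℕ → ℝ), (∀ n, 0 < tn n) ∧
    Tendsto un atTop (𝓝 u) ∧ Tendsto tn atTop (𝓝 0) ∧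
    L = limsup (fun n => diffQuot F φ (un n) (tn n)) atTop }

theorem genDirDeriv_eq_sSup (F : U → ℝ) (u φ : U) :
    genDirDeriv F u φ = sSup (genDirDerivSet F u φ) := rfl

theorem limsup_diffQuot_mem_genDirDerivSet (htpos : ∀ n, 0 < tn n)
    (hu : Tendsto un atTop (𝓝 u)) (ht : Tendsto tn atTop (𝓝 0)) :
    limsup (fun n => diffQuot F φ (un n) (tn n)) atTop ∈ genDirDerivSet F u φ :=
  ⟨un, tn, htpos, hu, ht, rfl⟩

theorem genDirDerivSet_nonempty (F : U → ℝ) (u φ : U) : (genDirDerivSet F u φ).Nonempty :=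
  ⟨_, limsup_diffQuot_mem_genDirDerivSet (un := fun _ => u) (fun _ => Nat.one_div_pos_of_nat)
    tendsto_const_nhds tendsto_one_div_add_atTop_nhds_zero_nat⟩

theorem eventually_abs_diffQuot_le (hs : s ∈ 𝓝 u) (hF : LipschitzOnWith K F s)
    (htpos : ∀ n, 0 < tn n) (hu : Tendsto un atTop (𝓝 u)) (ht : Tendsto tn atTop (𝓝 0)) :
    ∀ᶠ n in atTop, |diffQuot F φ (un n) (tn n)| ≤ K * ‖φ‖ := by
  have hshift : Tendsto (fun n => un n + tn n • φ) atTop (𝓝 u) := by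
    simpa using hu.add (ht.smul_const φ)
  filter_upwards [hu.eventually_mem hs, hshift.eventually_mem hs] with n hx hy
  have hdist := hF.dist_le_mul _ hy _ hx
  rw [Real.dist_eq, dist_eq_norm, add_sub_cancel_left, norm_smul,
    Real.norm_of_nonneg (htpos n).le] at hdist
  rw [diffQuot, abs_div, abs_of_pos (htpos n), div_le_iff₀ (htpos n)]
  linarith

theorem isBoundedUnder_le_diffQuot (hs : s ∈ 𝓝 u) (hF : LipschitzOnWith K F s)
    (htpos : ∀ n, 0 < tn n) (hu : Tendsto un atTop (𝓝 u)) (ht : Tendsto tn atTop (𝓝 0)) :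
    IsBoundedUnder (· ≤ ·) atTop fun n => diffQuot F φ (un n) (tn n) :=
  isBoundedUnder_of_eventually_le <|
    (eventually_abs_diffQuot_le hs hF htpos hu ht).mono fun _ h => (le_abs_self _).trans h

theorem isBoundedUnder_ge_diffQuot (hs : s ∈ 𝓝 u) (hF : LipschitzOnWith K F s)
    (htpos : ∀ n, 0 < tn n) (hu : Tendsto un atTop (𝓝 u)) (ht : Tendsto tn atTop (𝓝 0)) :
    IsBoundedUnder (· ≥ ·) atTop fun n => diffQuot F φ (un n) (tn n) :=
  isBoundedUnder_of_eventually_ge <|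
    (eventually_abs_diffQuot_le hs hF htpos hu ht).mono fun _ h => neg_le_of_abs_le h

theorem le_of_mem_genDirDerivSet (hs : s ∈ 𝓝 u) (hF : LipschitzOnWith K F s) {L : ℝ}
    (hL : L ∈ genDirDerivSet F u φ) : L ≤ K * ‖φ‖ := by
  obtain ⟨un, tn, htpos, hu, ht, rfl⟩ := hL
  exact limsup_le_of_le (isBoundedUnder_ge_diffQuot hs hF htpos hu ht).isCoboundedUnder_le <|
    (eventually_abs_diffQuot_le hs hF htpos hu ht).mono fun _ h => (le_abs_self _).trans h

theorem genDirDeriv_le_mul_norm (hs : s ∈ 𝓝 u) (hF : LipschitzOnWith K F s) (φ : U) :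
    genDirDeriv F u φ ≤ K * ‖φ‖ :=
  csSup_le (genDirDerivSet_nonempty F u φ) fun _ => le_of_mem_genDirDerivSet hs hF

theorem bddAbove_genDirDerivSet (hs : s ∈ 𝓝 u) (hF : LipschitzOnWith K F s) (φ : U) :
    BddAbove (genDirDerivSet F u φ) :=
  ⟨K * ‖φ‖, fun _ => le_of_mem_genDirDerivSet hs hF⟩

theorem le_genDirDeriv (hs : s ∈ 𝓝 u) (hF : LipschitzOnWith K F s) {L : ℝ}
    (hL : L ∈ genDirDerivSet F u φ) : L ≤ genDirDeriv F u φ :=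
  le_csSup (bddAbove_genDirDerivSet hs hF φ) hL

theorem mul_mem_genDirDerivSet_smul (hs : s ∈ 𝓝 u) (hF : LipschitzOnWith K F s) {c : ℝ}
    (hc : 0 < c) {L : ℝ} (hL : L ∈ genDirDerivSet F u φ) :
    c * L ∈ genDirDerivSet F u (c • φ) := by
  obtain ⟨un, tn, htpos, hu, ht, rfl⟩ := hL
  -- rescaling the step `tₙ ↦ tₙ / c` turns the quotients for `c • φ` into `c` times those for `φ`
  have hquot : (fun n => diffQuot F (c • φ) (un n) (tn n / c))
      = (c * ·) ∘ fun n => diffQuot F φ (un n) (tn n) := by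
    funext n
    simp only [diffQuot, Function.comp_apply, smul_smul, div_mul_cancel₀ _ hc.ne']
    field_simp
  have hlimsup := (monotone_mul_left_of_nonneg hc.le).map_limsup_of_continuousAt
    (fun n => diffQuot F φ (un n) (tn n)) (continuous_const_mul c).continuousAt
    (isBoundedUnder_le_diffQuot hs hF htpos hu ht)
    (isBoundedUnder_ge_diffQuot hs hF htpos hu ht).isCoboundedUnder_le
  rw [hlimsup, ← hquot]
  exact limsup_diffQuot_mem_genDirDerivSet (fun n => div_pos (htpos n) hc) hu
    (by simpa using ht.div_const c)

theorem smul_genDirDerivSet (hs : s ∈ 𝓝 u) (hF : LipschitzOnWith K F s) {c : ℝ} (hc : 0 < c) :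
    c • genDirDerivSet F u φ = genDirDerivSet F u (c • φ) := by
  refine subset_antisymm ?_ fun L hL => ⟨c⁻¹ * L, ?_, mul_inv_cancel_left₀ hc.ne' L⟩
  · rintro _ ⟨L, hL, rfl⟩
    exact mul_mem_genDirDerivSet_smul hs hF hc hL
  · simpa [smul_smul, inv_mul_cancel₀ hc.ne'] using
      mul_mem_genDirDerivSet_smul hs hF (inv_pos.2 hc) hL

theorem genDirDeriv_smul (hs : s ∈ 𝓝 u) (hF : LipschitzOnWith K F s) {c : ℝ} (hc : 0 < c)
    (φ : U) : genDirDeriv F u (c • φ) = c * genDirDeriv F u φ := by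
  rw [genDirDeriv_eq_sSup, genDirDeriv_eq_sSup, ← smul_genDirDerivSet hs hF hc,
    Real.sSup_smul_of_nonneg hc.le, smul_eq_mul]

theorem genDirDeriv_add_le (hs : s ∈ 𝓝 u) (hF : LipschitzOnWith K F s) (φ ψ : U) :
    genDirDeriv F u (φ + ψ) ≤ genDirDeriv F u φ + genDirDeriv F u ψ := by
  rw [genDirDeriv_eq_sSup F u (φ + ψ)]
  refine csSup_le (genDirDerivSet_nonempty F u _) ?_
  rintro _ ⟨un, tn, htpos, hu, ht, rfl⟩
  set vn : ℕ → U := fun n => un n + tn n • ψ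
  have hv : Tendsto vn atTop (𝓝 u) := by simpa using hu.add (ht.smul_const ψ)
  have hsplit : (fun n => diffQuot F (φ + ψ) (un n) (tn n))
      = (fun n => diffQuot F φ (vn n) (tn n)) + fun n => diffQuot F ψ (un n) (tn n) := by
    funext n
    simp only [diffQuot, Pi.add_apply, vn, ← add_div, smul_add]
    rw [add_comm (tn n • φ), ← add_assoc, sub_add_sub_cancel]
  rw [hsplit]
  calc _ ≤ _ := limsup_add_le
        (isBoundedUnder_ge_diffQuot hs hF htpos hv ht)
        (isBoundedUnder_le_diffQuot hs hF htpos hv ht)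
        (isBoundedUnder_ge_diffQuot hs hF htpos hu ht).isCoboundedUnder_le
        (isBoundedUnder_le_diffQuot hs hF htpos hu ht)
    _ ≤ _ := add_le_add (le_genDirDeriv hs hF (limsup_diffQuot_mem_genDirDerivSet htpos hv ht))
        (le_genDirDeriv hs hF (limsup_diffQuot_mem_genDirDerivSet htpos hu ht))

end GenDirDeriv

theorem exists_subgradient_vanishing_on_subspace_general
    {U : Type*} [NormedAddCommGroup U] [NormedSpace ℝ U]
    (F : U → ℝ) (u₀ : U) (hF : LocallyLipschitzAtPt F u₀)
    (V : Submodule ℝ U)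
    (hpos : ∀ φ ∈ V, 0 ≤ genDirDeriv F u₀ φ) :
    ∃ ustar : U →L[ℝ] ℝ,
      (∀ φ : U, ustar φ ≤ genDirDeriv F u₀ φ) ∧ ∀ φ ∈ V, ustar φ = 0 := by
  obtain ⟨K, s, hs, hLip⟩ := hF.exists_lipschitzOnWith
  exact exists_continuousLinearMap_le_of_sublinear (genDirDeriv F u₀) K
    (fun _ hc => genDirDeriv_smul hs hLip hc) (genDirDeriv_add_le hs hLip)
    (genDirDeriv_le_mul_norm hs hLip) V hpos

/-- if `H_{u₀} ≥ 0` on a closed subspace `V`, then there is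
`u* ∈ ∂⁰F(u₀)` (i.e. `⟨φ, u*⟩ ≤ H_{u₀}(φ)` for all `φ`) vanishing on `V`. -/
theorem exists_subgradient_vanishing_on_subspace
    {U : Type*} [NormedAddCommGroup U] [NormedSpace ℝ U] [CompleteSpace U]
    (F : U → ℝ) (u₀ : U) (hF : LocallyLipschitzAtPt F u₀)
    (V : Submodule ℝ U) (hV : IsClosed (V : Set U))
    (hpos : ∀ φ ∈ V, 0 ≤ genDirDeriv F u₀ φ) :
    ∃ ustar : U →L[ℝ] ℝ,
      (∀ φ : U, ustar φ ≤ genDirDeriv F u₀ φ) ∧ ∀ φ ∈ V, ustar φ = 0 :=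
  exists_subgradient_vanishing_on_subspace_general F u₀ hF V hpos
end

section
/- Under the hypotheses of the non-smooth Lagrange multiplier theorem with equality and inequality constraints (U, Z₁, Z₂ Banach spaces; C ⊂ Z₂ a convex cone with nonempty interior inducing the order z ≤ 0 ⇔ z ∈ −C, z < 0 ⇔ z ∈ int(−C), satisfying: z₁ ≤ 0 and z₂ < 0 imply z₁ + z₂ < 0; F : U → ℝ locally Lipschitz at u₀; G₁ : U → Z₁, G₂ : U → Z₂ Fréchet differentiable; G₁(u₀) = 0, G₂(u₀) ≤ 0; u₀ a local minimum of F subject to G₁(u) = 0 and G₂(u) ≤ 0; G₁'(u₀) onto; ‖G₁'(u₀+φ) − G₁'(u₀)‖ ≤ K‖φ‖ for ‖φ‖ < α; and there exists φ₀ ∈ U with G₁'(u₀)φ₀ = 0 and G₂'(u₀)φ₀ < 0), and additionally assuming the existence, for each direction φ_α in the kernel of G₁'(u₀), of corrections ψ₀^α(t) uniformly bounded by K₁ with G₁(u₀ + tφ_α + t²ψ₀^α(t)) = 0 for |t| < ε: for every φ ∈ U such that G₁'(u₀)φ = 0 and G₂'(u₀)φ = v − λG₂(u₀) for some v ∈ −C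 and λ ≥ 0, one has H_{u₀}(φ) ≥ 0. -/
/-!
For `σ > 0` the direction `χ = φ + σ φ₀` lies in the kernel of `G₁'(u₀)` and satisfies
`G₂'(u₀) χ = v - λ G₂(u₀) + σ G₂'(u₀) φ₀` with the last term strictly negative, so the corrected
curve `u₀ + t χ + t² ψ(t)` is feasible for small `t > 0` and `F` does not decrease along it.
Comparing `F` at `uₙ + tₙ φ` and `uₙ + tₙ χ` with `uₙ = u₀ + tₙ² ψ(tₙ)` through the Lipschitz
bound gives `H_{u₀}(φ) ≥ -K σ ‖φ₀‖`, and `σ → 0⁺` concludes.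
-/

open Filter Topology Metric

section Cone

variable {Z : Type*} [NormedAddCommGroup Z] [NormedSpace ℝ Z] {C : Set Z}

theorem smul_mem_neg_cone (hsmul : ∀ c ∈ C, ∀ t : ℝ, 0 ≤ t → t • c ∈ C) {a : Z} {t : ℝ}
    (ht : 0 ≤ t) (ha : a ∈ -C) : t • a ∈ -C := by
  rw [Set.mem_neg, ← smul_neg]
  exact hsmul _ ha t ht

theorem smul_mem_interior_neg_cone (hsmul : ∀ c ∈ C, ∀ t : ℝ, 0 ≤ t → t • c ∈ C) {a : Z}
    {t : ℝ} (ht : 0 < t) (ha : a ∈ interior (-C)) : t • a ∈ interior (-C) := by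
  open scoped Pointwise in
  have hsub : t • (-C) ⊆ -C :=
    Set.smul_set_subset_iff.2 fun _ hb => smul_mem_neg_cone hsmul ht.le hb
  have hmem : t • a ∈ interior (t • (-C)) := by
    rw [interior_smul₀ ht.ne']
    exact Set.smul_mem_smul_set ha
  exact interior_mono hsub hmem

theorem eventually_add_smul_mem_neg_cone (hsmul : ∀ c ∈ C, ∀ t : ℝ, 0 ≤ t → t • c ∈ C)
    (horder : ∀ z₁ z₂ : Z, z₁ ∈ -C → z₂ ∈ interior (-C) → z₁ + z₂ ∈ interior (-C))
    {z v w : Z} {lam : ℝ} (hz : z ∈ -C) (hv : v ∈ -C) (hw : w ∈ interior (-C))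
    {ι : Type*} {l : Filter ι} {t : ι → ℝ} {q : ι → Z} (ht_pos : ∀ n, 0 < t n)
    (ht : Tendsto t l (𝓝 0)) (hq : Tendsto q l (𝓝 (v - lam • z + w))) :
    ∀ᶠ n in l, z + t n • q n ∈ -C := by
  have hq' : Tendsto (fun n => q n - (v - lam • z)) l (𝓝 w) := by
    simpa using hq.sub_const (v - lam • z)
  have hlam_t : ∀ᶠ n in l, lam * t n < 1 := by
    have h := ht.const_mul lam
    rw [mul_zero] at h
    exact h.eventually_lt_const one_pos
  filter_upwards [hq'.eventually (isOpen_interior.mem_nhds hw), hlam_t] with n hqn hn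
  have hsplit :
      z + t n • q n = (1 - lam * t n) • z + (t n • v + t n • (q n - (v - lam • z))) := by
    module
  rw [hsplit]
  refine interior_subset (horder _ _ (smul_mem_neg_cone hsmul (by linarith) hz) ?_)
  exact horder _ _ (smul_mem_neg_cone hsmul (ht_pos n).le hv)
    (smul_mem_interior_neg_cone hsmul (ht_pos n) hqn)

theorem HasFDerivAt.eventually_mem_neg_cone {U : Type*} [NormedAddCommGroup U]
    [NormedSpace ℝ U] (hsmul : ∀ c ∈ C, ∀ t : ℝ, 0 ≤ t → t • c ∈ C)
    (horder : ∀ z₁ z₂ : Z, z₁ ∈ -C → z₂ ∈ interior (-C) → z₁ + z₂ ∈ interior (-C))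
    {G : U → Z} {G' : U →L[ℝ] Z} {u χ : U} (hG : HasFDerivAt G G' u) (hGu : G u ∈ -C)
    {v w : Z} {lam : ℝ} (hv : v ∈ -C) (hw : w ∈ interior (-C))
    (hχ : G' χ = v - lam • G u + w) {ι : Type*} {l : Filter ι} {t : ι → ℝ} {ψ : ι → U}
    {M : ℝ} (ht_pos : ∀ n, 0 < t n) (ht : Tendsto t l (𝓝 0)) (hψ : ∀ᶠ n in l, ‖ψ n‖ ≤ M) :
    ∀ᶠ n in l, G (u + t n • (χ + t n • ψ n)) ∈ -C := by
  have hdir : Tendsto (fun n => χ + t n • ψ n) l (𝓝 χ) := by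
    simpa using tendsto_const_nhds.add (ht.zero_smul_isBoundedUnder_le ⟨M, hψ⟩)
  have hstep : Tendsto (fun n => t n • (χ + t n • ψ n)) l (𝓝 0) := by
    simpa using ht.smul hdir
  have hquot := (hG.hasFDerivWithinAt (s := Set.univ)).lim hstep
    (Eventually.of_forall fun _ => Set.mem_univ _)
    (c := fun n => (t n)⁻¹) (by simpa [inv_smul_smul₀ (ht_pos _).ne'] using hdir)
  rw [hχ] at hquot
  filter_upwards [eventually_add_smul_mem_neg_cone hsmul horder hGu hv hw ht_pos ht hquot]
    with n hn
  rwa [smul_inv_smul₀ (ht_pos n).ne', add_sub_cancel] at hn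

end Cone

section GenDirDeriv

variable {U : Type*} [NormedAddCommGroup U] [NormedSpace ℝ U] {F : U → ℝ} {u φ : U} {r K : ℝ}

theorem eventually_abs_diffQuot_le_s7 (hr : 0 < r)
    (hF : ∀ v ∈ ball u r, ∀ w ∈ ball u r, |F v - F w| ≤ K * ‖v - w‖)
    {ι : Type*} {l : Filter ι} {un : ι → U} {t : ι → ℝ} (ht_pos : ∀ n, 0 < t n)
    (hun : Tendsto un l (𝓝 u)) (ht : Tendsto t l (𝓝 0)) :
    ∀ᶠ n in l, |(F (un n + t n • φ) - F (un n)) / t n| ≤ K * ‖φ‖ := by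
  have hshift : Tendsto (fun n => un n + t n • φ) l (𝓝 u) := by
    simpa using hun.add (ht.smul_const φ)
  filter_upwards [hun (ball_mem_nhds u hr), hshift (ball_mem_nhds u hr)] with n h₁ h₂
  rw [abs_div, abs_of_pos (ht_pos n), div_le_iff₀ (ht_pos n)]
  calc |F (un n + t n • φ) - F (un n)| ≤ K * ‖un n + t n • φ - un n‖ := hF _ h₂ _ h₁
    _ = K * ‖φ‖ * t n := by
      rw [add_sub_cancel_left, norm_smul, Real.norm_of_nonneg (ht_pos n).le]; ring

theorem limsup_diffQuot_le_genDirDeriv (hr : 0 < r)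
    (hF : ∀ v ∈ ball u r, ∀ w ∈ ball u r, |F v - F w| ≤ K * ‖v - w‖)
    {un : ℕ → U} {t : ℕ → ℝ} (ht_pos : ∀ n, 0 < t n) (hun : Tendsto un atTop (𝓝 u))
    (ht : Tendsto t atTop (𝓝 0)) :
    limsup (fun n => (F (un n + t n • φ) - F (un n)) / t n) atTop ≤ genDirDeriv F u φ := by
  refine le_csSup ⟨K * ‖φ‖, ?_⟩ ⟨un, t, ht_pos, hun, ht, rfl⟩
  rintro _ ⟨un', t', ht'_pos, hun', ht', rfl⟩
  have hbound := eventually_abs_diffQuot_le_s7 (φ := φ) hr hF ht'_pos hun' ht'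
  refine limsup_le_of_le (isCoboundedUnder_le_of_eventually_le atTop (x := -(K * ‖φ‖)) ?_) ?_
  · exact hbound.mono fun n hn => (abs_le.1 hn).1
  · exact hbound.mono fun n hn => (abs_le.1 hn).2

theorem le_genDirDeriv_of_eventually_le (hr : 0 < r)
    (hF : ∀ v ∈ ball u r, ∀ w ∈ ball u r, |F v - F w| ≤ K * ‖v - w‖)
    {un : ℕ → U} {t : ℕ → ℝ} (ht_pos : ∀ n, 0 < t n) (hun : Tendsto un atTop (𝓝 u))
    (ht : Tendsto t atTop (𝓝 0)) {a : ℕ → ℝ} {a₀ : ℝ} (ha : Tendsto a atTop (𝓝 a₀))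
    (hle : ∀ᶠ n in atTop, a n ≤ (F (un n + t n • φ) - F (un n)) / t n) :
    a₀ ≤ genDirDeriv F u φ := by
  have hbdd : IsBoundedUnder (· ≤ ·) atTop
      (fun n => (F (un n + t n • φ) - F (un n)) / t n) :=
    isBoundedUnder_of_eventually_le <|
      (eventually_abs_diffQuot_le_s7 hr hF ht_pos hun ht).mono fun n hn => (abs_le.1 hn).2
  calc a₀ = limsup a atTop := ha.limsup_eq.symm
    _ ≤ _ := limsup_le_limsup hle ha.isBoundedUnder_ge.isCoboundedUnder_le hbdd
    _ ≤ genDirDeriv F u φ := limsup_diffQuot_le_genDirDeriv hr hF ht_pos hun ht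

theorem neg_mul_norm_sub_le_genDirDeriv (hr : 0 < r)
    (hF : ∀ v ∈ ball u r, ∀ w ∈ ball u r, |F v - F w| ≤ K * ‖v - w‖)
    {S : Set U} (hmin : IsLocalMinOn F S u) {χ : U} {t : ℕ → ℝ} {ψ : ℕ → U} {M : ℝ}
    (ht_pos : ∀ n, 0 < t n) (ht : Tendsto t atTop (𝓝 0)) (hψ : ∀ᶠ n in atTop, ‖ψ n‖ ≤ M)
    (hS : ∀ᶠ n in atTop, u + t n • (χ + t n • ψ n) ∈ S) :
    -(K * ‖χ - φ‖) ≤ genDirDeriv F u φ := by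
  set un : ℕ → U := fun n => u + t n • (t n • ψ n)
  have htψ : Tendsto (fun n => t n • ψ n) atTop (𝓝 0) :=
    ht.zero_smul_isBoundedUnder_le ⟨M, hψ⟩
  have hun : Tendsto un atTop (𝓝 u) := by simpa using tendsto_const_nhds.add (ht.smul htψ)
  have hshift : Tendsto (fun n => un n + t n • φ) atTop (𝓝 u) := by
    simpa using hun.add (ht.smul_const φ)
  have hp : Tendsto (fun n => u + t n • (χ + t n • ψ n)) atTop (𝓝[S] u) := by
    refine tendsto_nhdsWithin_iff.2 ⟨?_, hS⟩
    simpa using tendsto_const_nhds.add (ht.smul (tendsto_const_nhds.add htψ))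
  have ha : Tendsto (fun n => -(K * ‖χ - φ‖) - K * ‖t n • ψ n‖) atTop
      (𝓝 (-(K * ‖χ - φ‖))) := by
    simpa using (htψ.norm.const_mul K).const_sub (-(K * ‖χ - φ‖))
  refine le_genDirDeriv_of_eventually_le hr hF ht_pos hun ht ha ?_
  filter_upwards [hp.eventually hmin, hp.mono_right nhdsWithin_le_nhds (ball_mem_nhds u hr),
    hun (ball_mem_nhds u hr), hshift (ball_mem_nhds u hr)]
    with n hFp hp_ball hun_ball hshift_ball
  have htn := ht_pos n
  have h₁ := (abs_le.1 (hF _ hp_ball _ hshift_ball)).2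
  have h₂ := (abs_le.1 (hF _ hun_ball _ (mem_ball_self hr))).2
  have e₁ : u + t n • (χ + t n • ψ n) - (un n + t n • φ) = t n • (χ - φ) := by
    simp only [un]; module
  have e₂ : un n - u = t n • (t n • ψ n) := by simp only [un]; abel
  rw [e₁, norm_smul, Real.norm_of_nonneg htn.le] at h₁
  rw [e₂, norm_smul, Real.norm_of_nonneg htn.le] at h₂
  rw [le_div_iff₀ htn]
  linarith

end GenDirDeriv

theorem genDirDeriv_nonneg_of_localMin_eq_ineq_constraints_general
    {U : Type*} [NormedAddCommGroup U] [NormedSpace ℝ U]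
    {Z₁ : Type*} [NormedAddCommGroup Z₁] [NormedSpace ℝ Z₁]
    {Z₂ : Type*} [NormedAddCommGroup Z₂] [NormedSpace ℝ Z₂]
    -- the cone `C ⊂ Z₂`: convex, closed under nonnegative scalar multiplication,
    -- with nonempty interior
    (C : Set Z₂)
    (hC_smul : ∀ c ∈ C, ∀ t : ℝ, 0 ≤ t → t • c ∈ C)
    -- order property: `z₁ ≤ 0` and `z₂ < 0` imply `z₁ + z₂ < 0`
    (hC_order : ∀ z₁ z₂ : Z₂, z₁ ∈ -C → z₂ ∈ interior (-C) → z₁ + z₂ ∈ interior (-C))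
    (F : U → ℝ) (u₀ : U) (hF : LocallyLipschitzAtPt F u₀)
    (G₁ : U → Z₁) (G₁' : U → U →L[ℝ] Z₁)
    (G₂ : U → Z₂) (G₂' : U → U →L[ℝ] Z₂) (hG₂ : ∀ u : U, HasFDerivAt G₂ (G₂' u) u)
    (hG₂0 : G₂ u₀ ∈ -C)
    -- `u₀` is a local minimum of `F` subject to `G₁ u = 0`, `G₂ u ≤ 0`
    (hmin : ∃ δ > (0 : ℝ), ∀ u ∈ ball u₀ δ, G₁ u = 0 → G₂ u ∈ -C → F u₀ ≤ F u)
    -- Slater-type condition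
    (hslater : ∃ φ₀ : U, G₁' u₀ φ₀ = 0 ∧ G₂' u₀ φ₀ ∈ interior (-C))
    -- corrections `ψ₀^α(t)`, uniformly bounded, restoring the equality constraint
    (hcorr : ∃ ε > (0 : ℝ), ∃ K₁ > (0 : ℝ), ∀ φα : U, G₁' u₀ φα = 0 →
      ∃ ψ : ℝ → U, ∀ t : ℝ, |t| < ε →
        ‖ψ t‖ ≤ K₁ ∧ G₁ (u₀ + t • φα + t ^ 2 • ψ t) = 0) :
    ∀ (φ : U) (v : Z₂) (lam : ℝ), G₁' u₀ φ = 0 → v ∈ -C → 0 ≤ lam →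
      G₂' u₀ φ = v - lam • G₂ u₀ → 0 ≤ genDirDeriv F u₀ φ := by
  obtain ⟨r, hr, K, -, hFlip⟩ := hF
  obtain ⟨δ, hδ, hδmin⟩ := hmin
  obtain ⟨ε, hε, K₁, -, hcorr⟩ := hcorr
  obtain ⟨φ₀, hφ₀ker, hφ₀int⟩ := hslater
  intro φ v lam hφ hv _ hG₂φ
  have hlocmin : IsLocalMinOn F {u | G₁ u = 0 ∧ G₂ u ∈ -C} u₀ :=
    mem_of_superset (inter_mem_nhdsWithin _ (ball_mem_nhds u₀ hδ))
      fun u ⟨hu, hball⟩ => hδmin u hball hu.1 hu.2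
  have hlower : ∀ σ : ℝ, 0 < σ → -(K * ‖σ • φ₀‖) ≤ genDirDeriv F u₀ φ := by
    intro σ hσ
    obtain ⟨ψ, hψ⟩ := hcorr (φ + σ • φ₀) (by simp [hφ, hφ₀ker])
    set t : ℕ → ℝ := fun n => 1 / ((n : ℝ) + 1)
    have ht_pos : ∀ n, 0 < t n := fun n => by positivity
    have ht : Tendsto t atTop (𝓝 0) := tendsto_one_div_add_atTop_nhds_zero_nat
    have hψt : ∀ᶠ n in atTop,
        ‖ψ (t n)‖ ≤ K₁ ∧ G₁ (u₀ + t n • (φ + σ • φ₀ + t n • ψ (t n))) = 0 := by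
      filter_upwards [ht.eventually_lt_const hε] with n hn
      obtain ⟨hbound, hG₁t⟩ := hψ (t n) (by rwa [abs_of_pos (ht_pos n)])
      refine ⟨hbound, ?_⟩
      rwa [smul_add _ (φ + σ • φ₀), smul_smul, ← sq, ← add_assoc]
    have hG₂t := (hG₂ u₀).eventually_mem_neg_cone (χ := φ + σ • φ₀) (lam := lam) hC_smul
      hC_order hG₂0 hv (smul_mem_interior_neg_cone hC_smul hσ hφ₀int)
      (by rw [map_add, map_smul, hG₂φ]) ht_pos ht (hψt.mono fun _ => And.left)
    have h := neg_mul_norm_sub_le_genDirDeriv (φ := φ) hr hFlip hlocmin ht_pos ht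
      (hψt.mono fun _ => And.left) ((hψt.and hG₂t).mono fun _ h => ⟨h.1.2, h.2⟩)
    rwa [add_sub_cancel_left] at h
  have hlim : Tendsto (fun σ : ℝ => -(K * ‖σ • φ₀‖)) (𝓝[>] 0) (𝓝 0) :=
    ((by fun_prop : Continuous fun σ : ℝ => -(K * ‖σ • φ₀‖)).tendsto' 0 0 (by simp)).mono_left
      nhdsWithin_le_nhds
  exact le_of_tendsto hlim (eventually_nhdsWithin_of_forall hlower)

/-- under the hypotheses of the non-smooth Lagrange multiplier theorem with
equality and inequality constraints, together with the existence of uniformly bounded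
corrections along kernel directions of `G₁'(u₀)`, one has `H_{u₀}(φ) ≥ 0` for every `φ`
with `G₁'(u₀) φ = 0` and `G₂'(u₀) φ = v - λ G₂(u₀)`, `v ≤ 0`, `λ ≥ 0`. -/
theorem genDirDeriv_nonneg_of_localMin_eq_ineq_constraints
    {U : Type*} [NormedAddCommGroup U] [NormedSpace ℝ U] [CompleteSpace U]
    {Z₁ : Type*} [NormedAddCommGroup Z₁] [NormedSpace ℝ Z₁] [CompleteSpace Z₁]
    {Z₂ : Type*} [NormedAddCommGroup Z₂] [NormedSpace ℝ Z₂] [CompleteSpace Z₂]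
    -- the cone `C ⊂ Z₂`: convex, closed under nonnegative scalar multiplication,
    -- with nonempty interior
    (C : Set Z₂) (hC_conv : Convex ℝ C)
    (hC_smul : ∀ c ∈ C, ∀ t : ℝ, 0 ≤ t → t • c ∈ C)
    (hC_int : (interior C).Nonempty)
    -- order property: `z₁ ≤ 0` and `z₂ < 0` imply `z₁ + z₂ < 0`
    (hC_order : ∀ z₁ z₂ : Z₂, z₁ ∈ -C → z₂ ∈ interior (-C) → z₁ + z₂ ∈ interior (-C))
    (F : U → ℝ) (u₀ : U) (hF : LocallyLipschitzAtPt F u₀)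
    (G₁ : U → Z₁) (G₁' : U → U →L[ℝ] Z₁) (hG₁ : ∀ u : U, HasFDerivAt G₁ (G₁' u) u)
    (G₂ : U → Z₂) (G₂' : U → U →L[ℝ] Z₂) (hG₂ : ∀ u : U, HasFDerivAt G₂ (G₂' u) u)
    (hG₁0 : G₁ u₀ = 0) (hG₂0 : G₂ u₀ ∈ -C)
    -- `u₀` is a local minimum of `F` subject to `G₁ u = 0`, `G₂ u ≤ 0`
    (hmin : ∃ δ > (0 : ℝ), ∀ u ∈ ball u₀ δ, G₁ u = 0 → G₂ u ∈ -C → F u₀ ≤ F u)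
    (hsurj : Function.Surjective (G₁' u₀))
    (hLip : ∃ α > (0 : ℝ), ∃ K > (0 : ℝ),
      ∀ φ : U, ‖φ‖ < α → ‖G₁' (u₀ + φ) - G₁' u₀‖ ≤ K * ‖φ‖)
    -- Slater-type condition
    (hslater : ∃ φ₀ : U, G₁' u₀ φ₀ = 0 ∧ G₂' u₀ φ₀ ∈ interior (-C))
    -- corrections `ψ₀^α(t)`, uniformly bounded, restoring the equality constraint
    (hcorr : ∃ ε > (0 : ℝ), ∃ K₁ > (0 : ℝ), ∀ φα : U, G₁' u₀ φα = 0 →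
      ∃ ψ : ℝ → U, ∀ t : ℝ, |t| < ε →
        ‖ψ t‖ ≤ K₁ ∧ G₁ (u₀ + t • φα + t ^ 2 • ψ t) = 0) :
    ∀ (φ : U) (v : Z₂) (lam : ℝ), G₁' u₀ φ = 0 → v ∈ -C → 0 ≤ lam →
      G₂' u₀ φ = v - lam • G₂ u₀ → 0 ≤ genDirDeriv F u₀ φ :=
  genDirDeriv_nonneg_of_localMin_eq_ineq_constraints_general C hC_smul hC_order F u₀ hF G₁ G₁' G₂
    G₂' hG₂ hG₂0 hmin hslater hcorr
end

section
/- Let U, Z₁, Z₂ be Banach spaces, let C ⊂ Z₂ be a convex cone with nonempty interior, let H : U → ℝ be a sublinear functional, let A₁ : U → Z₁ be a bounded linear operator that is onto, let A₂ : U → Z₂ be a bounded linear operator, and let g ∈ −C. Suppose there exists φ₀ ∈ U with A₁φ₀ = 0 and A₂φ₀ ∈ int(−C), and suppose (β, z₁*, z₂*) ∈ ℝ × Z₁* × Z₂* with (β, z₁*, z₂*) ≠ (0, 0, 0) satisfies β(H(φ) + r) + ⟨A₁φ, z₁*⟩ + ⟨A₂φ − v + λg, z₂*⟩ ≥ 0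 for all φ ∈ U, r ≥ 0, v ∈ −C, λ ≥ 0. Assume moreover that for every z ∈ int(−C) and every z* ∈ Z₂* with z* nonnegative on C and z* ≠ 0 one has ⟨z, z*⟩ < 0. Then β > 0, and (after normalizing β = 1): z₂* is nonnegative on C, ⟨g, z₂*⟩ = 0, and H(φ) + ⟨A₁φ, z₁*⟩ + ⟨A₂φ, z₂*⟩ ≥ 0 for all φ ∈ U. -/
/-! Each constraint coordinate of the separated set ranges over a cone (`r ≥ 0`, `v ∈ -C`,
`λ ≥ 0`), and an affine function `a + t b` bounded below on `t ≥ 0` has `b ≥ 0`; this gives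
`β ≥ 0`, `z₂* ≥ 0` on `C` and `⟨g, z₂*⟩ ≥ 0`, the last being also `≤ 0` since `g ∈ -C`.
If `β = 0`, the linear functional `φ ↦ ⟨A₁ φ, z₁*⟩ + ⟨A₂ φ, z₂*⟩` is bounded below, hence zero;
at the Slater point this forces `⟨A₂ φ₀, z₂*⟩ = 0`, so `z₂* = 0`, and then `z₁* = 0` because
`A₁` is onto, contradicting the nontriviality of the triple. -/

lemma nonneg_of_forall_nonneg_add_mul {a b : ℝ} (h : ∀ t : ℝ, 0 ≤ t → 0 ≤ a + t * b) :
    0 ≤ b := by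
  by_contra! hb
  have ht : 0 ≤ (|a| + 1) / -b := div_nonneg (by positivity) (by linarith)
  have key : (|a| + 1) / -b * b = -(|a| + 1) := by
    rw [div_mul_eq_mul_div, div_neg, mul_div_assoc, div_self hb.ne, mul_one]
  have := h _ ht
  linarith [le_abs_self a]

lemma map_nonneg_of_add_map_nonneg_on_cone {E : Type*} [AddCommGroup E] [Module ℝ E]
    {K : Set E} (hK : ∀ c ∈ K, ∀ t : ℝ, 0 ≤ t → t • c ∈ K) (f : E →ₗ[ℝ] ℝ) (a : ℝ)
    (h : ∀ c ∈ K, 0 ≤ a + f c) : ∀ c ∈ K, 0 ≤ f c := fun c hc =>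
  nonneg_of_forall_nonneg_add_mul fun t ht => by
    simpa only [map_smul, smul_eq_mul] using h _ (hK c hc t ht)

lemma LinearMap.apply_eq_zero_of_forall_nonneg {E : Type*} [AddCommGroup E] [Module ℝ E]
    (f : E →ₗ[ℝ] ℝ) (h : ∀ x, 0 ≤ f x) (x : E) : f x = 0 :=
  le_antisymm (by simpa using h (-x)) (h x)

lemma multipliers_eq_zero_of_slater
    {U Z₁ Z₂ : Type*} [NormedAddCommGroup U] [NormedSpace ℝ U]
    [NormedAddCommGroup Z₁] [NormedSpace ℝ Z₁] [NormedAddCommGroup Z₂] [NormedSpace ℝ Z₂]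
    {C : Set Z₂}
    (hC_dual : ∀ (z : Z₂) (zstar : Z₂ →L[ℝ] ℝ), z ∈ interior (-C) →
      (∀ c ∈ C, 0 ≤ zstar c) → zstar ≠ 0 → zstar z < 0)
    {A₁ : U →L[ℝ] Z₁} (hA₁ : Function.Surjective A₁) {A₂ : U →L[ℝ] Z₂}
    {φ₀ : U} (hφ₀₁ : A₁ φ₀ = 0) (hφ₀₂ : A₂ φ₀ ∈ interior (-C))
    {z₁star : Z₁ →L[ℝ] ℝ} {z₂star : Z₂ →L[ℝ] ℝ} (hz₂ : ∀ c ∈ C, 0 ≤ z₂star c)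
    (hlin : ∀ φ, 0 ≤ z₁star (A₁ φ) + z₂star (A₂ φ)) :
    z₁star = 0 ∧ z₂star = 0 := by
  have hℓ := LinearMap.apply_eq_zero_of_forall_nonneg
    ((z₁star.comp A₁ + z₂star.comp A₂ : U →L[ℝ] ℝ) : U →ₗ[ℝ] ℝ) hlin
  simp only [ContinuousLinearMap.toLinearMap_add, ContinuousLinearMap.coe_comp,
    LinearMap.add_apply, Function.comp_apply, ContinuousLinearMap.coe_coe] at hℓ
  have hz₂0 : z₂star = 0 := by
    by_contra hne
    have hneg := hC_dual _ z₂star hφ₀₂ hz₂ hne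
    have hzero := hℓ φ₀
    rw [hφ₀₁, map_zero, zero_add] at hzero
    linarith
  refine ⟨?_, hz₂0⟩
  ext z
  obtain ⟨φ, rfl⟩ := hA₁ z
  simpa [hz₂0] using hℓ φ

theorem separation_multiplier_nondegenerate_general
    {U : Type*} [NormedAddCommGroup U] [NormedSpace ℝ U]
    {Z₁ : Type*} [NormedAddCommGroup Z₁] [NormedSpace ℝ Z₁]
    {Z₂ : Type*} [NormedAddCommGroup Z₂] [NormedSpace ℝ Z₂]
    -- `C` is a convex cone with nonempty interior
    (C : Set Z₂)
    (hC_smul : ∀ c ∈ C, ∀ t : ℝ, 0 ≤ t → t • c ∈ C)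
    -- dual order property: `z < 0`, `z* ≥ 0` on `C`, `z* ≠ 0` imply `⟨z, z*⟩ < 0`
    (hC_dual : ∀ (z : Z₂) (zstar : Z₂ →L[ℝ] ℝ), z ∈ interior (-C) →
      (∀ c ∈ C, 0 ≤ zstar c) → zstar ≠ 0 → zstar z < 0)
    (H : U → ℝ)
    (A₁ : U →L[ℝ] Z₁) (hA₁ : Function.Surjective A₁)
    (A₂ : U →L[ℝ] Z₂) (g : Z₂) (hg : g ∈ -C)
    -- Slater point
    (φ₀ : U) (hφ₀₁ : A₁ φ₀ = 0) (hφ₀₂ : A₂ φ₀ ∈ interior (-C))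
    -- the separating triple
    (β : ℝ) (z₁star : Z₁ →L[ℝ] ℝ) (z₂star : Z₂ →L[ℝ] ℝ)
    (hne : ¬(β = 0 ∧ z₁star = 0 ∧ z₂star = 0))
    (hsep : ∀ (φ : U) (r : ℝ) (v : Z₂) (lam : ℝ), 0 ≤ r → v ∈ -C → 0 ≤ lam →
      0 ≤ β * (H φ + r) + z₁star (A₁ φ) + z₂star (A₂ φ - v + lam • g)) :
    0 < β ∧
    (∀ c ∈ C, 0 ≤ z₂star c) ∧
    z₂star g = 0 ∧
    (β = 1 → ∀ φ : U, 0 ≤ H φ + z₁star (A₁ φ) + z₂star (A₂ φ)) := by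
  have hg' : -g ∈ C := hg
  have h0 : (0 : Z₂) ∈ -C := by simpa using hC_smul _ hg' 0 le_rfl
  have hmain : ∀ φ, 0 ≤ β * H φ + z₁star (A₁ φ) + z₂star (A₂ φ) := fun φ => by
    simpa using hsep φ 0 0 0 le_rfl h0 le_rfl
  have hβ : 0 ≤ β := nonneg_of_forall_nonneg_add_mul fun r hr => by
    simpa [mul_add, mul_comm r] using hsep 0 r 0 0 hr h0 le_rfl
  have hz₂ : ∀ c ∈ C, 0 ≤ z₂star c :=
    map_nonneg_of_add_map_nonneg_on_cone hC_smul (z₂star : Z₂ →ₗ[ℝ] ℝ) (β * H 0) fun c hc => by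
      simpa using hsep 0 0 (-c) 0 le_rfl (by simpa using hc) le_rfl
  have hzg : 0 ≤ z₂star g := nonneg_of_forall_nonneg_add_mul fun t ht => by
    simpa using hsep 0 0 0 t le_rfl h0 ht
  have hβpos : 0 < β := by
    refine hβ.lt_of_ne fun hβ0 => hne ⟨hβ0.symm, ?_⟩
    exact multipliers_eq_zero_of_slater hC_dual hA₁ hφ₀₁ hφ₀₂ hz₂ fun φ => by
      simpa [← hβ0] using hmain φ
  refine ⟨hβpos, hz₂, le_antisymm (by simpa using hz₂ _ hg') hzg, fun hβ1 φ => ?_⟩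
  simpa [hβ1] using hmain φ

/-- separation step of the non-smooth Lagrange multiplier theorem. If the
nonzero triple `(β, z₁*, z₂*)` separates the set
`{(H(φ) + r, A₁ φ, A₂ φ - v + λ g)}` from the origin, `A₁` is onto, a Slater point `φ₀`
exists, and the cone order is strictly compatible with nonzero nonnegative functionals,
then `β > 0`, `z₂* ≥ 0` on `C`, `⟨g, z₂*⟩ = 0`, and (after normalizing `β = 1`)
`H(φ) + ⟨A₁ φ, z₁*⟩ + ⟨A₂ φ, z₂*⟩ ≥ 0` for all `φ`. -/
theorem separation_multiplier_nondegenerate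
    {U : Type*} [NormedAddCommGroup U] [NormedSpace ℝ U] [CompleteSpace U]
    {Z₁ : Type*} [NormedAddCommGroup Z₁] [NormedSpace ℝ Z₁] [CompleteSpace Z₁]
    {Z₂ : Type*} [NormedAddCommGroup Z₂] [NormedSpace ℝ Z₂] [CompleteSpace Z₂]
    -- `C` is a convex cone with nonempty interior
    (C : Set Z₂) (hC_conv : Convex ℝ C)
    (hC_smul : ∀ c ∈ C, ∀ t : ℝ, 0 ≤ t → t • c ∈ C)
    (hC_int : (interior C).Nonempty)
    -- dual order property: `z < 0`, `z* ≥ 0` on `C`, `z* ≠ 0` imply `⟨z, z*⟩ < 0`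
    (hC_dual : ∀ (z : Z₂) (zstar : Z₂ →L[ℝ] ℝ), z ∈ interior (-C) →
      (∀ c ∈ C, 0 ≤ zstar c) → zstar ≠ 0 → zstar z < 0)
    -- `H` is sublinear
    (H : U → ℝ)
    (hH_add : ∀ φ₁ φ₂ : U, H (φ₁ + φ₂) ≤ H φ₁ + H φ₂)
    (hH_smul : ∀ lam : ℝ, 0 < lam → ∀ φ : U, H (lam • φ) = lam * H φ)
    (A₁ : U →L[ℝ] Z₁) (hA₁ : Function.Surjective A₁)
    (A₂ : U →L[ℝ] Z₂) (g : Z₂) (hg : g ∈ -C)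
    -- Slater point
    (φ₀ : U) (hφ₀₁ : A₁ φ₀ = 0) (hφ₀₂ : A₂ φ₀ ∈ interior (-C))
    -- the separating triple
    (β : ℝ) (z₁star : Z₁ →L[ℝ] ℝ) (z₂star : Z₂ →L[ℝ] ℝ)
    (hne : ¬(β = 0 ∧ z₁star = 0 ∧ z₂star = 0))
    (hsep : ∀ (φ : U) (r : ℝ) (v : Z₂) (lam : ℝ), 0 ≤ r → v ∈ -C → 0 ≤ lam →
      0 ≤ β * (H φ + r) + z₁star (A₁ φ) + z₂star (A₂ φ - v + lam • g)) :
    0 < β ∧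
    (∀ c ∈ C, 0 ≤ z₂star c) ∧
    z₂star g = 0 ∧
    (β = 1 → ∀ φ : U, 0 ≤ H φ + z₁star (A₁ φ) + z₂star (A₂ φ)) :=
  separation_multiplier_nondegenerate_general C hC_smul hC_dual H A₁ hA₁ A₂ g hg φ₀ hφ₀₁ hφ₀₂ β
    z₁star z₂star hne hsep
end
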